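/- arXiv:2110.11643 — 5 statements merged into one kernel-verified Lean document; each statement's English description precedes it below -/
import Mathlib

section
/- Let k ≥ 0 be an integer and let f : ℝ → ℝ be (k+2)-times continuously differentiable on the interval [0,1]. Then ∫₀¹ x^k f({1/x}) dx = (1/(k+1)!) · ( Σ_{j=0}^{k} (k−j)! · ( f^{(j)}(0)·α_{k−j} − f^{(j)}(1)·(α_{k−j} − 1) ) + ∫₀¹ f^{(k+2)}(x) · log Γ(x+1) dx ), where α_0 = γ (the Euler–Mascheroni constant) and α_n = ζ(n+1) for n > 0, with ζ the Riemann zeta function. -/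
/-!
On `1/(n+2) < x ≤ 1/(n+1)` one has `{1/x} = 1/x - (n+1)`, so the substitution `x = 1/(u+n+1)`
and summation over `n` turn the left-hand side into `∫₀¹ f(u) ζ(k+2, u+1) du`.
Up to the factor `(-1)^k (k+1)!`, the Hurwitz zeta value `ζ(k+2, u+1)` is the `(k+2)`-nd derivative
of `log Γ(u+1)`: the convexity bounds `log (x-1) ≤ ψ(x) ≤ log x` give
`ψ(u+1) = -γ + ∑ (1/(n+1) - 1/(u+n+1))`, which can be differentiated termwise.
So `k+2` integrations by parts move all derivatives onto `f`, and the boundary terms come from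
`log Γ(1) = log Γ(2) = 0`, `ψ(1) = -γ`, `ψ(2) = 1 - γ`, `ζ(m, 1) = ζ(m)` and `ζ(m, 2) = ζ(m) - 1`.
-/

open MeasureTheory Real

/-- The sequence `α` : `α 0 = γ` and `α n = ζ(n+1)` for `n ≥ 1`. -/
noncomputable def alphaSeq (n : ℕ) : ℝ :=
  if n = 0 then Real.eulerMascheroniConstant else (riemannZeta ((n : ℂ) + 1)).re

open Set Filter Topology

theorem integral_mul_eq_sum_add_integral_iteratedDerivWithin {a b : ℝ} (hab : a < b)
    {G : ℕ → ℝ → ℝ} (n : ℕ) {f : ℝ → ℝ} (hf : ContDiffOn ℝ n f (Icc a b))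
    (hGc : ∀ m ≤ n, ContinuousOn (G m) (Icc a b))
    (hG : ∀ m < n, ∀ x ∈ Ioo a b, HasDerivAt (G m) (G (m + 1) x) x) :
    ∫ x in a..b, f x * G n x =
      ∑ i ∈ Finset.range n, (-1) ^ i *
        (iteratedDerivWithin i f (Icc a b) b * G (n - (i + 1)) b -
          iteratedDerivWithin i f (Icc a b) a * G (n - (i + 1)) a) +
      (-1) ^ n * ∫ x in a..b, iteratedDerivWithin n f (Icc a b) x * G 0 x := by
  induction n generalizing f with
  | zero => simp
  | succ n ih =>
    have hs : UniqueDiffOn ℝ (Icc a b) := uniqueDiffOn_Icc hab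
    have hab' : uIcc a b = Icc a b := uIcc_of_le hab.le
    have hf' : ContDiffOn ℝ n (derivWithin f (Icc a b)) (Icc a b) := hf.derivWithin hs le_rfl
    have by_parts : ∫ x in a..b, f x * G (n + 1) x =
        f b * G n b - f a * G n a - ∫ x in a..b, derivWithin f (Icc a b) x * G n x := by
      refine intervalIntegral.integral_mul_deriv_eq_deriv_mul_of_hasDerivAt
        (hab' ▸ hf.continuousOn) (hab' ▸ hGc n n.le_succ) (fun x hx => ?_)
        (fun x hx => ?_) ?_ ?_
      · rw [min_eq_left hab.le, max_eq_right hab.le] at hx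
        exact ((hf.differentiableOn (by simp)) x (Ioo_subset_Icc_self hx)).hasDerivWithinAt
          |>.hasDerivAt (Icc_mem_nhds hx.1 hx.2)
      · rw [min_eq_left hab.le, max_eq_right hab.le] at hx
        exact hG n n.lt_succ_self x hx
      · exact (hf'.continuousOn.mono hab'.le).intervalIntegrable
      · exact (hab' ▸ hGc (n + 1) le_rfl).intervalIntegrable
    rw [by_parts, ih hf' (fun m hm => hGc m (by omega)) (fun m hm => hG m (by omega)),
      Finset.sum_range_succ']
    simp only [← iteratedDerivWithin_succ', iteratedDerivWithin_zero, Nat.add_sub_add_right,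
      Nat.add_sub_cancel, pow_succ, pow_zero, mul_neg_one, neg_mul, Finset.sum_neg_distrib]
    ring

namespace Real

noncomputable def digamma (x : ℝ) : ℝ := deriv (log ∘ Gamma) x

theorem hasDerivAt_log_Gamma {x : ℝ} (hx : 0 < x) : HasDerivAt (log ∘ Gamma) (digamma x) x :=
  ((differentiableAt_Gamma fun m => by linarith [(m.cast_nonneg : (0 : ℝ) ≤ m)]).log
    (Gamma_pos_of_pos hx).ne').hasDerivAt

theorem digamma_one : digamma 1 = -eulerMascheroniConstant := by
  have h := hasDerivAt_Gamma_one.log (by rw [Gamma_one]; exact one_ne_zero)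
  rw [Gamma_one, div_one] at h
  exact h.deriv

theorem log_Gamma_add_one {x : ℝ} (hx : 0 < x) : log (Gamma (x + 1)) = log (Gamma x) + log x := by
  rw [Gamma_add_one hx.ne', log_mul hx.ne' (Gamma_pos_of_pos hx).ne', add_comm]

theorem digamma_add_one {x : ℝ} (hx : 0 < x) : digamma (x + 1) = digamma x + x⁻¹ := by
  have hshift := (hasDerivAt_log_Gamma (by linarith : 0 < x + 1)).comp_add_const x 1
  refine hshift.unique
    (((hasDerivAt_log_Gamma hx).add (hasDerivAt_log hx.ne')).congr_of_eventuallyEq ?_)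
  filter_upwards [eventually_gt_nhds hx] with y hy using log_Gamma_add_one hy

theorem digamma_two : digamma 2 = 1 - eulerMascheroniConstant := by
  rw [← one_add_one_eq_two, digamma_add_one one_pos, digamma_one, inv_one, neg_add_eq_sub]

theorem log_sub_one_le_digamma {x : ℝ} (hx : 1 < x) : log (x - 1) ≤ digamma x := by
  have hx₁ : 0 < x - 1 := sub_pos.2 hx
  have h := convexOn_log_Gamma.slope_le_deriv (mem_Ioi.2 hx₁) (mem_Ioi.2 (by linarith))
    (by linarith) (hasDerivAt_log_Gamma (by linarith)).differentiableAt
  have e := log_Gamma_add_one hx₁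
  rw [sub_add_cancel] at e
  rw [slope_def_field, sub_sub_cancel, div_one, Function.comp_apply, Function.comp_apply, e,
    add_sub_cancel_left] at h
  exact h

theorem digamma_le_log {x : ℝ} (hx : 0 < x) : digamma x ≤ log x := by
  have h := convexOn_log_Gamma.deriv_le_slope (mem_Ioi.2 hx) (mem_Ioi.2 (by linarith))
    (lt_add_one x) (hasDerivAt_log_Gamma hx).differentiableAt
  rw [slope_def_field, add_sub_cancel_left, div_one, Function.comp_apply, Function.comp_apply,
    log_Gamma_add_one hx, add_sub_cancel_left] at h
  exact h

theorem digamma_add_nat {x : ℝ} (hx : 0 < x) (N : ℕ) :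
    digamma (x + N) = digamma x + ∑ i ∈ Finset.range N, (x + i)⁻¹ := by
  induction N with
  | zero => simp
  | succ N ih =>
    rw [Nat.cast_succ, ← add_assoc, digamma_add_one (by positivity), ih, Finset.sum_range_succ,
      add_assoc]

theorem tendsto_digamma_add_nat_sub_log {x : ℝ} (hx : 0 < x) :
    Tendsto (fun N : ℕ => digamma (x + N) - log N) atTop (𝓝 0) := by
  have hlog (c : ℝ) : Tendsto (fun N : ℕ => log (N + c) - log N) atTop (𝓝 0) :=
    (tendsto_log_comp_add_sub_log c).comp tendsto_natCast_atTop_atTop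
  refine tendsto_of_tendsto_of_tendsto_of_le_of_le' (hlog (x - 1)) (hlog x) ?_ ?_
  · filter_upwards [eventually_ge_atTop 1] with N hN
    have : (1 : ℝ) ≤ N := by exact_mod_cast hN
    have h := log_sub_one_le_digamma (by linarith : 1 < x + N)
    rw [show x + N - 1 = N + (x - 1) by ring] at h
    linarith
  · filter_upwards with N
    have h := digamma_le_log (by positivity : 0 < x + N)
    rw [add_comm (N : ℝ) x]
    linarith

end Real

/-- `hurwitzSeries m x` is the Hurwitz zeta value `ζ(m, x + 1)`. -/
noncomputable def hurwitzSeries (m : ℕ) (x : ℝ) : ℝ := ∑' n : ℕ, ((x + n + 1) ^ m)⁻¹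

section HurwitzSeries

variable {x : ℝ}

lemma add_nat_add_one_pos (hx : -1 < x) (n : ℕ) : 0 < x + n + 1 := by
  linarith [(n.cast_nonneg : (0 : ℝ) ≤ n)]

lemma summable_inv_add_nat_add_one_pow (hx : -1 < x) {m : ℕ} (hm : 2 ≤ m) :
    Summable fun n : ℕ => ((x + n + 1) ^ m)⁻¹ := by
  refine ((summable_one_div_nat_add_rpow (x + 1) m).2 (by exact_mod_cast hm)).congr fun n => ?_
  rw [← add_assoc, add_comm (n : ℝ), abs_of_pos (add_nat_add_one_pos hx n), rpow_natCast, one_div]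

lemma inv_add_nat_add_one_pow_le {a : ℝ} (ha : -1 < a) (hax : a ≤ x) (n m : ℕ) :
    ((x + n + 1) ^ m)⁻¹ ≤ ((a + n + 1) ^ m)⁻¹ := by
  have := add_nat_add_one_pos ha n
  gcongr

lemma hasDerivAt_inv_add_nat_add_one_pow (hx : -1 < x) (n m : ℕ) :
    HasDerivAt (fun y : ℝ => ((y + n + 1) ^ m)⁻¹) (-m * ((x + n + 1) ^ (m + 1))⁻¹) x := by
  have hpos := add_nat_add_one_pos hx n
  refine ((((hasDerivAt_id x).add_const (n : ℝ)).add_const 1).pow m |>.inv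
    (pow_ne_zero m hpos.ne')).congr_deriv ?_
  simp only [id, mul_one, Pi.pow_apply]
  rcases m with _ | m
  · simp
  · rw [Nat.add_sub_cancel]
    field_simp
    ring

lemma hasDerivAt_tsum_of_hasDerivAt_inv_pow {g : ℕ → ℝ → ℝ} {C : ℝ} {m : ℕ} (hm : 2 ≤ m)
    (hg : ∀ (n : ℕ) (y : ℝ), -1 < y → HasDerivAt (g n) (C * ((y + n + 1) ^ m)⁻¹) y) (hx : -1 < x)
    (hgx : Summable fun n => g n x) :
    HasDerivAt (fun y => ∑' n, g n y) (C * hurwitzSeries m x) x := by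
  obtain ⟨a, ha, hax⟩ : ∃ a, -1 < a ∧ a < x := ⟨(x - 1) / 2, by linarith, by linarith⟩
  have h := hasDerivAt_tsum_of_isPreconnected
    ((summable_inv_add_nat_add_one_pow ha hm).mul_left ‖C‖) isOpen_Ioi isPreconnected_Ioi
    (fun n y hy => hg n y (ha.trans hy)) (fun n y hy => ?_) hax hgx hax
  · rwa [tsum_mul_left] at h
  · have hy₀ := add_nat_add_one_pos (ha.trans hy) n
    rw [norm_mul, norm_of_nonneg (inv_nonneg.2 (pow_pos hy₀ m).le)]
    exact mul_le_mul_of_nonneg_left (inv_add_nat_add_one_pow_le ha (le_of_lt hy) n m)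
      (norm_nonneg C)

lemma hasDerivAt_hurwitzSeries {m : ℕ} (hm : 2 ≤ m) (hx : -1 < x) :
    HasDerivAt (hurwitzSeries m) (-m * hurwitzSeries (m + 1) x) x :=
  hasDerivAt_tsum_of_hasDerivAt_inv_pow (by omega)
    (fun n _ hy => hasDerivAt_inv_add_nat_add_one_pow hy n m) hx
    (summable_inv_add_nat_add_one_pow hx hm)

lemma tsum_inv_nat_add_one_pow_eq_alphaSeq (m : ℕ) :
    ∑' n : ℕ, (((n : ℝ) + 1) ^ (m + 2))⁻¹ = alphaSeq (m + 1) := by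
  have hre : 1 < ((m + 2 : ℕ) : ℂ).re := by
    rw [Complex.natCast_re]; exact_mod_cast (by omega : 1 < m + 2)
  have e (n : ℕ) :
      1 / ((n : ℂ) + 1) ^ ((m + 2 : ℕ) : ℂ) = (((((n : ℝ) + 1) ^ (m + 2))⁻¹ : ℝ) : ℂ) := by
    rw [Complex.cpow_natCast]; push_cast; rw [one_div]
  rw [alphaSeq, if_neg m.succ_ne_zero,
    show ((m + 1 : ℕ) : ℂ) + 1 = ((m + 2 : ℕ) : ℂ) by push_cast; ring,
    zeta_eq_tsum_one_div_nat_add_one_cpow hre, tsum_congr e, ← Complex.ofReal_tsum,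
    Complex.ofReal_re]

lemma hurwitzSeries_apply_zero (m : ℕ) : hurwitzSeries (m + 2) 0 = alphaSeq (m + 1) := by
  simp only [hurwitzSeries, zero_add, tsum_inv_nat_add_one_pow_eq_alphaSeq]

lemma hurwitzSeries_apply_one (m : ℕ) : hurwitzSeries (m + 2) 1 = alphaSeq (m + 1) - 1 := by
  have hs : Summable fun n : ℕ => (((n : ℝ) + 1) ^ (m + 2))⁻¹ := by
    simpa using summable_inv_add_nat_add_one_pow (x := 0) (by norm_num) (m := m + 2) (by omega)
  rw [← tsum_inv_nat_add_one_pow_eq_alphaSeq, hs.tsum_eq_zero_add, hurwitzSeries]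
  simp only [Nat.cast_add, Nat.cast_one, Nat.cast_zero, zero_add, one_pow, inv_one,
    add_sub_cancel_left]
  congr 1; ext n; ring

end HurwitzSeries

lemma summable_inv_nat_add_one_sub_inv {x : ℝ} (hx : -1 < x) :
    Summable fun n : ℕ => ((n : ℝ) + 1)⁻¹ - (x + n + 1)⁻¹ := by
  have hc : -1 < min x 0 := lt_min hx (by norm_num)
  refine .of_norm_bounded ((summable_inv_add_nat_add_one_pow hc le_rfl).mul_left |x|) fun n => ?_
  have h₀ := add_nat_add_one_pos hc n
  have h₁ : min x 0 + n + 1 ≤ n + 1 := by linarith [min_le_right x 0]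
  have h₂ : min x 0 + n + 1 ≤ x + n + 1 := by linarith [min_le_left x 0]
  have e : ((n : ℝ) + 1)⁻¹ - (x + n + 1)⁻¹ = x * (((n : ℝ) + 1) * (x + n + 1))⁻¹ := by
    rw [inv_sub_inv (by linarith) (by linarith), div_eq_mul_inv]
    ring
  rw [e, norm_mul, norm_inv, Real.norm_eq_abs,
    norm_of_nonneg (mul_pos (by linarith) (by linarith)).le]
  gcongr
  rw [sq]
  gcongr

lemma hasSum_digamma_add_one {x : ℝ} (hx : -1 < x) :
    HasSum (fun n : ℕ => ((n : ℝ) + 1)⁻¹ - (x + n + 1)⁻¹)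
      (digamma (x + 1) + eulerMascheroniConstant) := by
  have hx₁ : 0 < x + 1 := by linarith
  have hpartial (N : ℕ) : ∑ n ∈ Finset.range N, (((n : ℝ) + 1)⁻¹ - (x + n + 1)⁻¹) =
      ((harmonic N : ℝ) - log N) - (digamma (x + 1 + N) - log N) + digamma (x + 1) := by
    have hshift : ∑ i ∈ Finset.range N, (x + 1 + i)⁻¹ = ∑ n ∈ Finset.range N, (x + n + 1)⁻¹ :=
      Finset.sum_congr rfl fun i _ => by rw [add_right_comm]
    rw [digamma_add_nat hx₁, hshift, Finset.sum_sub_distrib, harmonic]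
    push_cast
    ring
  have hlim : Tendsto (fun N : ℕ => ∑ n ∈ Finset.range N, (((n : ℝ) + 1)⁻¹ - (x + n + 1)⁻¹))
      atTop (𝓝 (digamma (x + 1) + eulerMascheroniConstant)) := by
    have h := (tendsto_harmonic_sub_log.sub (tendsto_digamma_add_nat_sub_log hx₁)).add_const
      (digamma (x + 1))
    rw [sub_zero, add_comm eulerMascheroniConstant] at h
    exact h.congr fun N => (hpartial N).symm
  have hs := (summable_inv_nat_add_one_sub_inv hx).hasSum
  rwa [tendsto_nhds_unique hs.tendsto_sum_nat hlim] at hs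

lemma hasDerivAt_digamma_add_one {x : ℝ} (hx : -1 < x) :
    HasDerivAt (fun y => digamma (y + 1)) (hurwitzSeries 2 x) x := by
  have hD := hasDerivAt_tsum_of_hasDerivAt_inv_pow (C := 1)
    (g := fun (n : ℕ) (y : ℝ) => ((n : ℝ) + 1)⁻¹ - (y + n + 1)⁻¹) le_rfl (fun n y hy => ?_) hx
    (summable_inv_nat_add_one_sub_inv hx)
  · rw [one_mul] at hD
    refine (hD.sub_const eulerMascheroniConstant).congr_of_eventuallyEq ?_
    filter_upwards [eventually_gt_nhds hx] with y hy
    rw [(hasSum_digamma_add_one hy).tsum_eq, add_sub_cancel_right]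
  · simpa using (hasDerivAt_inv_add_nat_add_one_pow hy n 1).const_sub ((n : ℝ) + 1)⁻¹

/-- `logGammaSuccDeriv m` is the `m`-th derivative of `x ↦ log Γ(x + 1)` on `(-1, ∞)`. -/
noncomputable def logGammaSuccDeriv : ℕ → ℝ → ℝ
  | 0, x => log (Gamma (x + 1))
  | 1, x => digamma (x + 1)
  | m + 2, x => (-1) ^ m * (m + 1).factorial * hurwitzSeries (m + 2) x

lemma hasDerivAt_logGammaSuccDeriv (m : ℕ) {x : ℝ} (hx : -1 < x) :
    HasDerivAt (logGammaSuccDeriv m) (logGammaSuccDeriv (m + 1) x) x :=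
  match m with
  | 0 => (hasDerivAt_log_Gamma (by linarith)).comp_add_const x 1
  | 1 => (hasDerivAt_digamma_add_one hx).congr_deriv (by simp [logGammaSuccDeriv])
  | m + 2 => by
    refine ((hasDerivAt_hurwitzSeries (by omega) hx).const_mul _).congr_deriv ?_
    simp only [logGammaSuccDeriv, Nat.factorial_succ, pow_succ]
    push_cast
    ring

lemma logGammaSuccDeriv_zero_apply_zero : logGammaSuccDeriv 0 0 = 0 := by
  simp [logGammaSuccDeriv]

lemma logGammaSuccDeriv_zero_apply_one : logGammaSuccDeriv 0 1 = 0 := by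
  simp [logGammaSuccDeriv, one_add_one_eq_two]

lemma logGammaSuccDeriv_succ_apply_zero (m : ℕ) :
    logGammaSuccDeriv (m + 1) 0 = (-1) ^ (m + 1) * m.factorial * alphaSeq m := by
  rcases m with _ | m
  · simp [logGammaSuccDeriv, digamma_one, alphaSeq]
  · simp [logGammaSuccDeriv, hurwitzSeries_apply_zero, pow_succ]

lemma logGammaSuccDeriv_succ_apply_one (m : ℕ) :
    logGammaSuccDeriv (m + 1) 1 = (-1) ^ (m + 1) * m.factorial * (alphaSeq m - 1) := by
  rcases m with _ | m
  · simp [logGammaSuccDeriv, one_add_one_eq_two, digamma_two, alphaSeq]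
  · simp [logGammaSuccDeriv, hurwitzSeries_apply_one, pow_succ]

lemma iUnion_Ioc_inv_nat_succ :
    ⋃ n : ℕ, Ioc ((n + 2 : ℝ)⁻¹) ((n + 1 : ℝ)⁻¹) = Ioc 0 1 := by
  ext x
  simp only [mem_iUnion, mem_Ioc]
  constructor
  · rintro ⟨n, hlo, hhi⟩
    exact ⟨(inv_pos.2 (by positivity)).trans hlo,
      hhi.trans (inv_le_one_of_one_le₀ (by linarith [(n.cast_nonneg : (0 : ℝ) ≤ n)]))⟩
  · rintro ⟨hx₀, hx₁⟩
    have hfloor : 1 ≤ ⌊x⁻¹⌋₊ := Nat.le_floor (by simpa using one_le_inv_iff₀.2 ⟨hx₀, hx₁⟩)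
    refine ⟨⌊x⁻¹⌋₊ - 1, ?_, ?_⟩
    · rw [inv_lt_comm₀ (by positivity) hx₀, Nat.cast_sub hfloor]
      linarith [Nat.lt_floor_add_one x⁻¹]
    · rw [le_inv_comm₀ hx₀ (by positivity), Nat.cast_sub hfloor]
      linarith [Nat.floor_le (inv_pos.2 hx₀).le]

lemma pairwise_disjoint_Ioc_inv_nat_succ :
    Pairwise (Function.onFun Disjoint fun n : ℕ => Ioc ((n + 2 : ℝ)⁻¹) ((n + 1 : ℝ)⁻¹)) := by
  have h : Antitone fun n : ℕ => ((n : ℝ) + 1)⁻¹ := fun a b hab => by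
    dsimp only
    gcongr
  convert h.pairwise_disjoint_on_Ioc_succ using 4 with n
  simp only [Order.succ_eq_add_one, Nat.cast_add, Nat.cast_one]
  ring

lemma setIntegral_Ioc_inv_nat_succ (g : ℝ → ℝ) (k n : ℕ) :
    ∫ x in Ioc ((n + 2 : ℝ)⁻¹) ((n + 1 : ℝ)⁻¹), x ^ k * g (Int.fract (1 / x)) =
      ∫ u in (0 : ℝ)..1, g u * ((u + n + 1) ^ (k + 2))⁻¹ := by
  have hpos (u : ℝ) (hu : 0 ≤ u) : 0 < u + n + 1 := add_nat_add_one_pos (by linarith) n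
  have hsub := intervalIntegral.integral_comp_mul_deriv_of_deriv_nonpos (a := 0) (b := 1)
    (f := fun u => (u + n + 1)⁻¹) (f' := fun u => -((u + n + 1) ^ 2)⁻¹)
    (g := fun x => x ^ k * g (Int.fract (1 / x)))
    (ContinuousOn.inv₀ (by fun_prop) fun u hu => (hpos u (by simp_all)).ne')
    (fun u hu => by
      simpa using hasDerivAt_inv_add_nat_add_one_pow (x := u) (by simp_all; linarith) n 1)
    (fun u _ => neg_nonpos.2 (by positivity))
  rw [show ((0 : ℝ) + n + 1)⁻¹ = (n + 1 : ℝ)⁻¹ by ring_nf,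
    show ((1 : ℝ) + n + 1)⁻¹ = (n + 2 : ℝ)⁻¹ by ring_nf] at hsub
  rw [← intervalIntegral.integral_of_le (by gcongr; linarith), intervalIntegral.integral_symm,
    ← hsub, ← intervalIntegral.integral_neg, intervalIntegral.integral_of_le zero_le_one,
    intervalIntegral.integral_of_le zero_le_one, integral_Ioc_eq_integral_Ioo,
    integral_Ioc_eq_integral_Ioo]
  refine setIntegral_congr_fun measurableSet_Ioo fun u hu => ?_
  simp only [Function.comp_apply, one_div, inv_inv, Int.fract_add_one, Int.fract_add_natCast,
    Int.fract_eq_self.2 ⟨hu.1.le, hu.2⟩]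
  rw [pow_add, mul_inv, inv_pow]
  ring

lemma integral_pow_mul_comp_fract_inv_of_continuous {g : ℝ → ℝ} (hg : Continuous g) (k : ℕ) :
    ∫ x in (0 : ℝ)..1, x ^ k * g (Int.fract (1 / x)) =
      ∫ u in (0 : ℝ)..1, g u * hurwitzSeries (k + 2) u := by
  obtain ⟨C, hC⟩ := (isCompact_Icc (a := (0 : ℝ)) (b := 1)).exists_bound_of_continuousOn
    hg.continuousOn
  have hint : IntegrableOn (fun x => x ^ k * g (Int.fract (1 / x))) (Ioc 0 1) := by
    refine Measure.integrableOn_of_bounded (M := C) (by simp)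
      ((measurable_id.pow_const k).mul (hg.measurable.comp
        (measurable_fract.comp (measurable_const.div measurable_id)))).aestronglyMeasurable ?_
    filter_upwards [ae_restrict_mem measurableSet_Ioc] with x hx
    rw [norm_mul, norm_pow, norm_of_nonneg hx.1.le]
    exact (mul_le_of_le_one_left (norm_nonneg _) (pow_le_one₀ hx.1.le hx.2)).trans
      (hC _ ⟨Int.fract_nonneg _, (Int.fract_lt_one _).le⟩)
  have hpieces := hasSum_integral_iUnion (fun n => measurableSet_Ioc)
    pairwise_disjoint_Ioc_inv_nat_succ (iUnion_Ioc_inv_nat_succ ▸ hint)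
  rw [iUnion_Ioc_inv_nat_succ] at hpieces
  simp only [setIntegral_Ioc_inv_nat_succ] at hpieces
  have hseries : HasSum (fun n : ℕ => ∫ u in (0 : ℝ)..1, g u * ((u + n + 1) ^ (k + 2))⁻¹)
      (∫ u in (0 : ℝ)..1, g u * hurwitzSeries (k + 2) u) := by
    refine intervalIntegral.hasSum_integral_of_dominated_convergence
      (fun n _ => C * (((0 : ℝ) + n + 1) ^ (k + 2))⁻¹) (fun n => by fun_prop)
      (fun n => ae_of_all _ fun u hu => ?_) (ae_of_all _ fun u _ => ?_) intervalIntegrable_const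
      (ae_of_all _ fun u hu => ?_)
    all_goals rw [uIoc_of_le zero_le_one] at *
    · have hu₀ := add_nat_add_one_pos (x := u) (by linarith [hu.1]) n
      rw [norm_mul, norm_inv, norm_pow, norm_of_nonneg hu₀.le]
      exact mul_le_mul (hC u (Ioc_subset_Icc_self hu))
        (inv_add_nat_add_one_pow_le (by norm_num) hu.1.le n _) (by positivity)
        ((norm_nonneg _).trans (hC 0 ⟨le_rfl, zero_le_one⟩))
    · exact (summable_inv_add_nat_add_one_pow (by norm_num) (by omega)).mul_left C
    · exact (summable_inv_add_nat_add_one_pow (by linarith [hu.1]) (by omega)).hasSum.mul_left (g u)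
  rw [intervalIntegral.integral_of_le zero_le_one, hpieces.unique hseries]

lemma integral_pow_mul_comp_fract_inv {g : ℝ → ℝ} (hg : ContinuousOn g (Icc 0 1)) (k : ℕ) :
    ∫ x in (0 : ℝ)..1, x ^ k * g (Int.fract (1 / x)) =
      ∫ u in (0 : ℝ)..1, g u * hurwitzSeries (k + 2) u := by
  set g' := IccExtend zero_le_one ((Icc (0 : ℝ) 1).domRestrict g)
  have hg'g : EqOn g' g (Icc 0 1) := fun y hy => IccExtend_of_mem _ _ hy
  calc ∫ x in (0 : ℝ)..1, x ^ k * g (Int.fract (1 / x))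
      = ∫ x in (0 : ℝ)..1, x ^ k * g' (Int.fract (1 / x)) := by
        simp only [hg'g ⟨Int.fract_nonneg _, (Int.fract_lt_one _).le⟩]
    _ = ∫ u in (0 : ℝ)..1, g' u * hurwitzSeries (k + 2) u :=
        integral_pow_mul_comp_fract_inv_of_continuous (continuous_IccExtend_iff.2 hg.domRestrict) k
    _ = ∫ u in (0 : ℝ)..1, g u * hurwitzSeries (k + 2) u :=
        intervalIntegral.integral_congr fun u hu => by
          rw [hg'g (uIcc_of_le (zero_le_one (α := ℝ)) ▸ hu)]

lemma sum_range_mul_logGammaSuccDeriv (k : ℕ) (c₀ c₁ : ℕ → ℝ) :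
    ∑ i ∈ Finset.range (k + 2), (-1) ^ i *
        (c₁ i * logGammaSuccDeriv (k + 2 - (i + 1)) 1 -
          c₀ i * logGammaSuccDeriv (k + 2 - (i + 1)) 0) =
      (-1) ^ k * ∑ j ∈ Finset.range (k + 1),
        ((k - j).factorial : ℝ) * (c₀ j * alphaSeq (k - j) - c₁ j * (alphaSeq (k - j) - 1)) := by
  rw [Finset.sum_range_succ, Nat.sub_self, logGammaSuccDeriv_zero_apply_zero,
    logGammaSuccDeriv_zero_apply_one, Finset.mul_sum]
  simp only [mul_zero, sub_zero, add_zero]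
  refine Finset.sum_congr rfl fun i hi => ?_
  obtain ⟨j, rfl⟩ := Nat.exists_eq_add_of_le (Nat.lt_succ_iff.1 (Finset.mem_range.1 hi))
  rw [show i + j + 2 - (i + 1) = j + 1 by omega, Nat.add_sub_cancel_left,
    logGammaSuccDeriv_succ_apply_zero, logGammaSuccDeriv_succ_apply_one]
  ring

theorem fractional_moment_formula (k : ℕ) (f : ℝ → ℝ)
    (hf : ContDiffOn ℝ (k + 2) f (Set.Icc 0 1)) :
    ∫ x in (0:ℝ)..1, x ^ k * f (Int.fract (1 / x)) =
      (1 / (Nat.factorial (k + 1) : ℝ)) *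
        ((∑ j ∈ Finset.range (k + 1),
            (Nat.factorial (k - j) : ℝ) *
              (iteratedDerivWithin j f (Set.Icc 0 1) 0 * alphaSeq (k - j) -
                iteratedDerivWithin j f (Set.Icc 0 1) 1 * (alphaSeq (k - j) - 1))) +
          ∫ x in (0:ℝ)..1,
            iteratedDerivWithin (k + 2) f (Set.Icc 0 1) x * Real.log (Real.Gamma (x + 1))) := by
  have hG (m : ℕ) {x : ℝ} (hx : 0 ≤ x) :=
    hasDerivAt_logGammaSuccDeriv m (x := x) (by linarith)
  have hparts := integral_mul_eq_sum_add_integral_iteratedDerivWithin zero_lt_one (k + 2) hf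
    (fun m _ x hx => (hG m hx.1).continuousAt.continuousWithinAt) (fun m _ x hx => hG m hx.1.le)
  rw [sum_range_mul_logGammaSuccDeriv] at hparts
  have hkernel : ∫ x in (0 : ℝ)..1, f x * logGammaSuccDeriv (k + 2) x =
      (-1) ^ k * (k + 1).factorial * ∫ u in (0 : ℝ)..1, f u * hurwitzSeries (k + 2) u := by
    rw [← intervalIntegral.integral_const_mul]
    congr 1 with u
    simp only [logGammaSuccDeriv]
    ring
  rw [hkernel, pow_add, neg_one_sq, mul_one, mul_assoc, ← mul_add] at hparts
  rw [integral_pow_mul_comp_fract_inv hf.continuousOn, one_div,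
    eq_inv_mul_iff_mul_eq₀ (Nat.cast_ne_zero.2 (k + 1).factorial_ne_zero)]
  exact mul_left_cancel₀ (pow_ne_zero k (neg_ne_zero.2 one_ne_zero)) hparts
end

section
/- For integers k ≥ m ≥ 1, ∫₀¹ x^k {1/x}^m dx = 1/(k+1−m) − (1/((k+1)·C(k,m))) · Σ_{j=k−m+1}^{k} C(j, k−m) · ζ(j+1), where ζ is the Riemann zeta function and C(a,b) the binomial coefficient. -/
open MeasureTheory Real

/-!
On `(1/(n+2), 1/(n+1)]` we have `{1/x} = 1/x - (n+1)`, so `x ^ (k+2) * {1/x} ^ (m+1)` is smooth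
there, vanishes at the right end and equals `(n+2)^-(k+2)` at the left end. Integrating its
derivative over every piece and summing gives, for `I m k = ∫₀¹ x^k {1/x}^m dx`,
`(k+2) I (m+1) (k+1) = (m+1) I m k - (ζ(k+2) - 1)`. Starting from `I 0 k = 1/(k+1)`, induction on
`m` with `k - m` fixed yields the formula.
-/

lemma mem_Ioc_one_div_iff {n : ℕ} {x : ℝ} :
    x ∈ Set.Ioc (1 / ((n : ℝ) + 2)) (1 / ((n : ℝ) + 1)) ↔
      0 < x ∧ (n : ℝ) + 1 ≤ 1 / x ∧ 1 / x < n + 2 := by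
  constructor
  · rintro ⟨hlo, hhi⟩
    have hx : 0 < x := lt_trans (by positivity) hlo
    refine ⟨hx, ?_, ?_⟩
    · rwa [le_one_div (by positivity) hx]
    · rwa [one_div_lt hx (by positivity)]
  · rintro ⟨hx, hlo, hhi⟩
    refine ⟨?_, ?_⟩
    · rwa [one_div_lt (by positivity) hx]
    · rwa [le_one_div hx (by positivity)]

lemma fract_one_div_of_mem_Ioc {n : ℕ} {x : ℝ}
    (hx : x ∈ Set.Ioc (1 / ((n : ℝ) + 2)) (1 / ((n : ℝ) + 1))) :
    Int.fract (1 / x) = 1 / x - (n + 1) := by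
  obtain ⟨-, hlo, hhi⟩ := mem_Ioc_one_div_iff.mp hx
  exact Int.fract_eq_iff.mpr ⟨by linarith, by linarith, n + 1, by push_cast; ring⟩

lemma pairwise_disjoint_Ioc_one_div :
    Pairwise (Function.onFun Disjoint
      fun n : ℕ => Set.Ioc (1 / ((n : ℝ) + 2)) (1 / ((n : ℝ) + 1))) := by
  intro i j hij
  refine Set.disjoint_left.mpr fun x hi hj => hij ?_
  obtain ⟨-, hi₁, hi₂⟩ := mem_Ioc_one_div_iff.mp hi
  obtain ⟨-, hj₁, hj₂⟩ := mem_Ioc_one_div_iff.mp hj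
  have hij' : i < j + 1 := by exact_mod_cast (by linarith : (i : ℝ) < j + 1)
  have hji' : j < i + 1 := by exact_mod_cast (by linarith : (j : ℝ) < i + 1)
  omega

lemma iUnion_Ioc_one_div :
    ⋃ n : ℕ, Set.Ioc (1 / ((n : ℝ) + 2)) (1 / ((n : ℝ) + 1)) = Set.Ioc 0 1 := by
  ext x
  simp_rw [Set.mem_iUnion, mem_Ioc_one_div_iff]
  rw [Set.mem_Ioc]
  constructor
  · rintro ⟨n, hx, hlo, -⟩
    have h1 : 1 ≤ 1 / x := le_trans (by linarith [n.cast_nonneg (α := ℝ)]) hlo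
    rw [le_one_div zero_lt_one hx, div_one] at h1
    exact ⟨hx, h1⟩
  · rintro ⟨hx, hx1⟩
    have h1 : 1 ≤ 1 / x := by rwa [le_one_div zero_lt_one hx, div_one]
    have hfloor : 1 ≤ ⌊1 / x⌋₊ := Nat.le_floor (by exact_mod_cast h1)
    refine ⟨⌊1 / x⌋₊ - 1, hx, ?_, ?_⟩
    · rw [Nat.cast_sub hfloor]
      push_cast
      linarith [Nat.floor_le (by positivity : 0 ≤ 1 / x)]
    · rw [Nat.cast_sub hfloor]
      push_cast
      linarith [Nat.lt_floor_add_one (1 / x)]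

lemma hasSum_setIntegral_Ioc_one_div {g : ℝ → ℝ} (hg : IntegrableOn g (Set.Ioc 0 1)) :
    HasSum (fun n : ℕ => ∫ x in Set.Ioc (1 / ((n : ℝ) + 2)) (1 / ((n : ℝ) + 1)), g x)
      (∫ x in Set.Ioc 0 1, g x) := by
  rw [← iUnion_Ioc_one_div] at hg ⊢
  exact hasSum_integral_iUnion (fun _ => measurableSet_Ioc) pairwise_disjoint_Ioc_one_div hg

lemma hasSum_one_div_nat_add_two_pow {j : ℕ} (hj : 1 ≤ j) :
    HasSum (fun n : ℕ => 1 / ((n : ℝ) + 2) ^ (j + 1))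
      ((riemannZeta ((j : ℂ) + 1)).re - 1) := by
  have hsum : Summable fun n : ℕ => 1 / (n : ℝ) ^ (j + 1) :=
    Real.summable_one_div_nat_pow.mpr (by omega)
  have hzeta : (riemannZeta ((j : ℂ) + 1)).re = ∑' n : ℕ, 1 / (n : ℝ) ^ (j + 1) := by
    rw [← Nat.cast_add_one, zeta_nat_eq_tsum_of_gt_one (by omega),
      ← Complex.ofReal_re (∑' n : ℕ, 1 / (n : ℝ) ^ (j + 1)), Complex.ofReal_tsum]
    push_cast
    rfl
  rw [hzeta]
  simpa [Finset.sum_range_succ, add_assoc, one_add_one_eq_two] using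
    (hasSum_nat_add_iff' 2).mpr hsum.hasSum

lemma integral_pow_mul_one_div_sub_pow_succ {a b : ℝ} (c : ℝ) (ha : 0 < a) (hab : a ≤ b)
    (m k : ℕ) :
    (k + 2) * ∫ x in a..b, x ^ (k + 1) * (1 / x - c) ^ (m + 1) =
      (m + 1) * (∫ x in a..b, x ^ k * (1 / x - c) ^ m) +
        (b ^ (k + 2) * (1 / b - c) ^ (m + 1) - a ^ (k + 2) * (1 / a - c) ^ (m + 1)) := by
  have hpos : ∀ x ∈ Set.uIcc a b, 0 < x := fun x hx =>
    ha.trans_le (by rw [Set.uIcc_of_le hab] at hx; exact hx.1)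
  have hderiv : ∀ x ∈ Set.uIcc a b, HasDerivAt (fun x => x ^ (k + 2) * (1 / x - c) ^ (m + 1))
      ((k + 2) * (x ^ (k + 1) * (1 / x - c) ^ (m + 1)) - (m + 1) * (x ^ k * (1 / x - c) ^ m))
      x := by
    intro x hx
    have hx := (hpos x hx).ne'
    have h := (hasDerivAt_pow (k + 2) x).mul (((hasDerivAt_inv hx).sub_const c).pow (m + 1))
    simp only [one_div]
    refine h.congr_deriv ?_
    simp only [Pi.pow_apply, Nat.add_sub_cancel]
    field_simp
    push_cast
    ring
  have hint : ∀ j l : ℕ,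
      IntervalIntegrable (fun x : ℝ => x ^ j * (1 / x - c) ^ l) volume a b :=
    fun j l => ContinuousOn.intervalIntegrable fun x hx =>
      (by have := (hpos x hx).ne'; fun_prop : ContinuousAt _ x).continuousWithinAt
  have hftc := intervalIntegral.integral_eq_sub_of_hasDerivAt hderiv
    (((hint _ _).const_mul _).sub ((hint _ _).const_mul _))
  rw [intervalIntegral.integral_sub ((hint _ _).const_mul _) ((hint _ _).const_mul _),
    intervalIntegral.integral_const_mul, intervalIntegral.integral_const_mul] at hftc
  linarith

noncomputable def fractMoment (m k : ℕ) : ℝ :=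
  ∫ x in (0 : ℝ)..1, x ^ k * Int.fract (1 / x) ^ m

noncomputable def fractPiece (n m k : ℕ) : ℝ :=
  ∫ x in (1 / ((n : ℝ) + 2))..(1 / ((n : ℝ) + 1)), x ^ k * (1 / x - (n + 1)) ^ m

lemma integrableOn_pow_mul_fract_one_div_pow (m k : ℕ) :
    IntegrableOn (fun x : ℝ => x ^ k * Int.fract (1 / x) ^ m) (Set.Ioc 0 1) := by
  refine Measure.integrableOn_of_bounded (M := 1) measure_Ioc_lt_top.ne
    (by fun_prop) (ae_restrict_of_forall_mem measurableSet_Ioc fun x hx => ?_)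
  have hfract := Int.fract_nonneg (1 / x)
  rw [Real.norm_eq_abs, abs_of_nonneg (by have := hx.1.le; positivity)]
  exact mul_le_one₀ (pow_le_one₀ hx.1.le hx.2) (by positivity)
    (pow_le_one₀ hfract (Int.fract_lt_one _).le)

lemma hasSum_fractPiece (m k : ℕ) : HasSum (fun n => fractPiece n m k) (fractMoment m k) := by
  rw [fractMoment, intervalIntegral.integral_of_le zero_le_one]
  convert hasSum_setIntegral_Ioc_one_div (integrableOn_pow_mul_fract_one_div_pow m k)
    using 2 with n
  rw [fractPiece, intervalIntegral.integral_of_le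
    (one_div_le_one_div_of_le (by positivity) (by linarith))]
  exact setIntegral_congr_fun measurableSet_Ioc fun x hx => by rw [fract_one_div_of_mem_Ioc hx]

lemma fractPiece_succ (n m k : ℕ) :
    (k + 2) * fractPiece n (m + 1) (k + 1) =
      (m + 1) * fractPiece n m k - 1 / ((n : ℝ) + 2) ^ (k + 2) := by
  rw [fractPiece, fractPiece, integral_pow_mul_one_div_sub_pow_succ _ (by positivity)
    (one_div_le_one_div_of_le (by positivity) (by linarith))]
  have hright : 1 / (1 / ((n : ℝ) + 1)) - (n + 1) = 0 := by rw [one_div_one_div, sub_self]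
  have hleft : 1 / (1 / ((n : ℝ) + 2)) - (n + 1) = 1 := by rw [one_div_one_div]; ring
  rw [hright, hleft, zero_pow m.succ_ne_zero, one_pow, mul_zero, mul_one, zero_sub,
    ← sub_eq_add_neg, one_div_pow]

lemma fractMoment_succ (m k : ℕ) :
    (k + 2) * fractMoment (m + 1) (k + 1) =
      (m + 1) * fractMoment m k - ((riemannZeta (((k + 1 : ℕ) : ℂ) + 1)).re - 1) := by
  refine ((hasSum_fractPiece (m + 1) (k + 1)).mul_left ((k : ℝ) + 2)).unique ?_
  simp only [fractPiece_succ]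
  exact ((hasSum_fractPiece m k).mul_left ((m : ℝ) + 1)).sub
    (hasSum_one_div_nat_add_two_pow (j := k + 1) le_add_self)

lemma fractMoment_zero (k : ℕ) : fractMoment 0 k = 1 / ((k : ℝ) + 1) := by
  simp [fractMoment, integral_pow]

lemma fractMoment_add (p m : ℕ) :
    fractMoment m (p + m) = 1 / ((p : ℝ) + 1) -
      1 / ((((p + m : ℕ) : ℝ) + 1) * ((p + m).choose m : ℝ)) *
        ∑ j ∈ Finset.Icc (p + 1) (p + m),
          (j.choose p : ℝ) * (riemannZeta ((j : ℂ) + 1)).re := by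
  induction m with
  | zero => simp [fractMoment_zero]
  | succ m ih =>
    have hrec := fractMoment_succ m (p + m)
    have hchoose : (((p + m : ℕ) : ℝ) + 1) * ((p + m).choose m : ℝ) =
        ((m : ℝ) + 1) * ((p + m + 1).choose (m + 1) : ℝ) := by
      exact_mod_cast (Nat.add_one_mul_choose_eq (p + m) m).trans (mul_comm _ _)
    have hsymm : (p + m + 1).choose p = (p + m + 1).choose (m + 1) :=
      Nat.choose_symm_add (a := p) (b := m + 1)
    have hpos : (0 : ℝ) < ((p + m + 1).choose (m + 1) : ℝ) := by
      exact_mod_cast Nat.choose_pos (by omega)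
    rw [ih, hchoose] at hrec
    rw [← add_assoc, Finset.sum_Icc_succ_top (by omega), hsymm]
    push_cast at hrec ⊢
    field_simp at hrec ⊢
    linear_combination hrec

theorem fractional_moment_pow_high_general (m k : ℕ) (hk : m ≤ k) :
    ∫ x in (0:ℝ)..1, x ^ k * (Int.fract (1 / x)) ^ m =
      1 / ((k : ℝ) + 1 - m) -
        (1 / (((k : ℝ) + 1) * (k.choose m : ℝ))) *
          ∑ j ∈ Finset.Icc (k - m + 1) k, (j.choose (k - m) : ℝ) * (riemannZeta ((j : ℂ) + 1)).re := by
  obtain ⟨p, rfl⟩ := Nat.exists_eq_add_of_le' hk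
  rw [Nat.add_sub_cancel, show ((p + m : ℕ) : ℝ) + 1 - m = p + 1 by push_cast; ring]
  exact fractMoment_add p m

theorem fractional_moment_pow_high (m k : ℕ) (hm : 1 ≤ m) (hk : m ≤ k) :
    ∫ x in (0:ℝ)..1, x ^ k * (Int.fract (1 / x)) ^ m =
      1 / ((k : ℝ) + 1 - m) -
        (1 / (((k : ℝ) + 1) * (k.choose m : ℝ))) *
          ∑ j ∈ Finset.Icc (k - m + 1) k, (j.choose (k - m) : ℝ) * (riemannZeta ((j : ℂ) + 1)).re :=
  fractional_moment_pow_high_general m k hk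
end

section
/- For integers m ≥ 1 and m+1 ≤ j ≤ 2m, Σ_{k=j−m}^{m} ( (−1)^k / (m+k+1) ) · C(m,k) · C(m+k+1, j) = ( (−1)^m (1 + (−1)^j) / j ) · C(m, j−m−1). -/
/-!
Since `C(m+k+1, j) / (m+k+1) = C(m+k, j-1) / j`, the sum is `1/j` times a truncated sum of
`(-1)^k C(m,k) C(m+k, j-1)`. Over the full range `0 ≤ k ≤ m` this is the coefficient of `X^(j-1)` in
`∑ (-1)^k C(m,k) (X+1)^(m+k) = (X+1)^m (1 - (X+1))^m = (-1)^m X^m (X+1)^m`, namely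
`(-1)^m C(m, j-1-m)`. Of the omitted terms `k < j-m` only `k = j-m-1` survives (`C(m+k, j-1) = 0`
otherwise), and subtracting it leaves `((-1)^m - (-1)^(j-m-1)) C(m, j-m-1)`.
-/

open Finset Polynomial

theorem Polynomial.sum_range_neg_one_pow_mul_choose_mul_X_add_one_pow {R : Type*} [CommRing R]
    (m : ℕ) :
    ∑ k ∈ range (m + 1), C ((-1) ^ k * m.choose k : R) * (X + 1) ^ (m + k) =
      C ((-1) ^ m) * (X ^ m * (X + 1) ^ m) := by
  calc ∑ k ∈ range (m + 1), C ((-1) ^ k * m.choose k : R) * (X + 1) ^ (m + k)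
      = (∑ k ∈ range (m + 1), (-(X + 1)) ^ k * 1 ^ (m - k) * m.choose k) * (X + 1) ^ m := by
        rw [sum_mul]
        refine sum_congr rfl fun k _ => ?_
        rw [neg_pow (X + 1 : R[X]), one_pow, pow_add]
        simp only [map_mul, map_pow, map_neg, map_one, map_natCast]
        ring
    _ = C ((-1) ^ m) * (X ^ m * (X + 1) ^ m) := by
        rw [← add_pow, map_pow, map_neg, map_one]
        ring

theorem Nat.sum_range_neg_one_pow_mul_choose_mul_choose_add {R : Type*} [CommRing R]
    {m n : ℕ} (h : m ≤ n) :
    ∑ k ∈ range (m + 1), ((-1) ^ k * m.choose k * (m + k).choose n : R) =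
      (-1) ^ m * m.choose (n - m) := by
  have := congrArg (coeff · n) (sum_range_neg_one_pow_mul_choose_mul_X_add_one_pow (R := R) m)
  obtain ⟨d, rfl⟩ := Nat.exists_eq_add_of_le h
  simpa only [finsetSum_coeff, coeff_C_mul, coeff_X_add_one_pow, Nat.add_sub_cancel,
    add_comm m d, coeff_mul_X_pow, mul_comm (X ^ m)] using this

theorem Nat.sum_Icc_neg_one_pow_mul_choose_mul_choose_add {R : Type*} [CommRing R]
    {m n : ℕ} (h₁ : m ≤ n) (h₂ : n ≤ 2 * m) :
    ∑ k ∈ Icc (n + 1 - m) m, ((-1) ^ k * m.choose k * (m + k).choose n : R) =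
      ((-1) ^ m - (-1) ^ (n - m)) * m.choose (n - m) := by
  set f : ℕ → R := fun k ↦ (-1) ^ k * m.choose k * (m + k).choose n
  have hlow : ∑ k ∈ range (n - m + 1), f k = (-1) ^ (n - m) * m.choose (n - m) := by
    rw [sum_range_succ, sum_eq_zero fun k hk ↦ ?_, zero_add]
    · simp only [f, Nat.add_sub_cancel' h₁, Nat.choose_self, cast_one, mul_one]
    · rw [mem_range] at hk
      simp only [f, Nat.choose_eq_zero_of_lt (show m + k < n by omega), cast_zero, mul_zero]
  have hsplit := sum_range_add_sum_Ico f (show n - m + 1 ≤ m + 1 by omega)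
  rw [sum_range_neg_one_pow_mul_choose_mul_choose_add h₁, hlow, Ico_add_one_right_eq_Icc] at hsplit
  rw [show n + 1 - m = n - m + 1 by omega]
  linear_combination hsplit

theorem Nat.cast_choose_succ_succ_div {K : Type*} [Field K] [CharZero K] (n k : ℕ) :
    ((n + 1).choose (k + 1) : K) / (n + 1) = n.choose k / (k + 1) := by
  rw [div_eq_div_iff n.cast_add_one_ne_zero k.cast_add_one_ne_zero]
  exact_mod_cast (Nat.add_one_mul_choose_eq n k).symm.trans (mul_comm _ _)

theorem alternating_sum_choose_identity_general (m j : ℕ)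
    (hj1 : m + 1 ≤ j) (hj2 : j ≤ 2 * m) :
    ∑ k ∈ Finset.Icc (j - m) m,
        ((-1 : ℚ) ^ k / (m + k + 1 : ℚ)) * (m.choose k : ℚ) * ((m + k + 1).choose j : ℚ) =
      ((-1 : ℚ) ^ m * (1 + (-1 : ℚ) ^ j) / (j : ℚ)) * (m.choose (j - m - 1) : ℚ) := by
  obtain ⟨n, rfl⟩ : ∃ n, j = n + 1 := ⟨j - 1, by omega⟩
  have hsign : (-1 : ℚ) ^ (n - m) = (-1) ^ (m + n) :=
    neg_one_pow_congr (by rw [Nat.even_sub (by omega), Nat.even_add]; tauto)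
  calc ∑ k ∈ Icc (n + 1 - m) m,
        ((-1 : ℚ) ^ k / (m + k + 1 : ℚ)) * (m.choose k : ℚ) * ((m + k + 1).choose (n + 1) : ℚ)
      = (∑ k ∈ Icc (n + 1 - m) m, ((-1) ^ k * m.choose k * (m + k).choose n : ℚ)) / (n + 1) := by
        rw [sum_div]
        refine sum_congr rfl fun k _ ↦ ?_
        have := Nat.cast_choose_succ_succ_div (K := ℚ) (m + k) n
        push_cast at this
        rw [mul_div_assoc, ← this]
        ring
    _ = ((-1) ^ m - (-1) ^ (n - m)) * m.choose (n - m) / (n + 1) := by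
        rw [Nat.sum_Icc_neg_one_pow_mul_choose_mul_choose_add (by omega) (by omega)]
    _ = _ := by
        rw [hsign, show n + 1 - m - 1 = n - m by omega]
        push_cast
        ring

theorem alternating_sum_choose_identity (m j : ℕ) (hm : 1 ≤ m)
    (hj1 : m + 1 ≤ j) (hj2 : j ≤ 2 * m) :
    ∑ k ∈ Finset.Icc (j - m) m,
        ((-1 : ℚ) ^ k / (m + k + 1 : ℚ)) * (m.choose k : ℚ) * ((m + k + 1).choose j : ℚ) =
      ((-1 : ℚ) ^ m * (1 + (-1 : ℚ) ^ j) / (j : ℚ)) * (m.choose (j - m - 1) : ℚ) :=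
  alternating_sum_choose_identity_general m j hj1 hj2
end

section
/- For every integer m ≥ 1 and every real x, x^m (1−x)^m = 1/( (2m+1)·C(2m,m) ) + (−1)^m Σ_{j=m+1}^{2m} ( (1 + (−1)^j)/j ) · C(m, j−m−1) · B_j(x), where B_j(x) is the j-th Bernoulli polynomial and C(a,b) the binomial coefficient. -/
/-!
Since `B_j(x + 1) - B_j(x) = j x^(j-1)`, the Bernoulli sum has the same forward difference as
`x^m (1 - x)^m`, so the two sides differ by a polynomial of period one, i.e. by a constant.
Integrating over `[0, 1]`, where every `B_j` with `j ≥ 1` has mean zero and `x^m (1 - x)^m` has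
the Beta integral `m!² / (2m + 1)!`, shows that the constant is the one in the statement.
-/

open Polynomial Finset

theorem Polynomial.eval_eq_eval_zero_of_eval_add_one {R : Type*} [CommRing R] [IsDomain R]
    [CharZero R] {p : R[X]} (h : ∀ x, p.eval (x + 1) = p.eval x) (x : R) :
    p.eval x = p.eval 0 := by
  have hnat (n : ℕ) : (p - C (p.eval 0)).IsRoot n := by
    induction n with
    | zero => simp
    | succ n ih => simpa [h] using ih
  have hzero : p - C (p.eval 0) = 0 :=
    eq_zero_of_infinite_isRoot _ <| (Set.infinite_range_of_injective Nat.cast_injective).mono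
      (Set.range_subset_iff.2 hnat)
  simpa [sub_eq_zero] using congr_arg (eval x) hzero

theorem Polynomial.eval_eq_integral_of_eval_add_one {p : ℝ[X]}
    (h : ∀ x, p.eval (x + 1) = p.eval x) (x : ℝ) : p.eval x = ∫ t in (0 : ℝ)..1, p.eval t := by
  simp [eval_eq_eval_zero_of_eval_add_one h]

theorem Polynomial.aeval_bernoulli_add_one {A : Type*} [CommRing A] [Algebra ℚ A] (n : ℕ)
    (x : A) : aeval (x + 1) (bernoulli n) = aeval x (bernoulli n) + n * x ^ (n - 1) := by
  simpa [aeval_comp, add_comm] using congr_arg (aeval x) (bernoulli_comp_one_add_X n)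

theorem Polynomial.integral_aeval_bernoulli {n : ℕ} (hn : n ≠ 0) :
    ∫ x in (0 : ℝ)..1, aeval x (bernoulli n) = 0 := by
  have hderiv (x : ℝ) : HasDerivAt (fun x => aeval x (bernoulli (n + 1)))
      ((n + 1) * aeval x (bernoulli n)) x := by
    simpa [derivative_bernoulli_add_one] using (bernoulli (n + 1)).hasDerivAt_aeval x
  have hftc := intervalIntegral.integral_eq_sub_of_hasDerivAt (fun x _ => hderiv x)
    (Continuous.intervalIntegrable (by fun_prop) 0 1)
  have hends : aeval (1 : ℝ) (bernoulli (n + 1)) = aeval 0 (bernoulli (n + 1)) := by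
    simpa [hn] using aeval_bernoulli_add_one (n + 1) (0 : ℝ)
  rw [intervalIntegral.integral_const_mul, hends, sub_self] at hftc
  exact (mul_eq_zero.1 hftc).resolve_left (by positivity)

theorem pow_mul_one_sub_pow_add_one_sub {R : Type*} [CommRing R] (m : ℕ) (x : R) :
    (x + 1) ^ m * (1 - (x + 1)) ^ m - x ^ m * (1 - x) ^ m =
      (-1) ^ m * ∑ j ∈ Icc (m + 1) (2 * m),
        (1 + (-1) ^ j) * (m.choose (j - m - 1) : R) * x ^ (j - 1) := by
  have hsq : ((-1 : R) ^ m) * (-1) ^ m = 1 := by rw [← mul_pow]; simp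
  have hexpand : (x + 1) ^ m * (1 - (x + 1)) ^ m - x ^ m * (1 - x) ^ m =
      (-1) ^ m * ∑ i ∈ range (m + 1),
        (1 + (-1) ^ (m + 1 + i)) * (m.choose i : R) * x ^ (m + i) := by
    rw [show 1 - (x + 1) = -x by ring, show 1 - x = -x + 1 by ring, add_pow, add_pow, sum_mul,
      mul_sum, mul_sum, ← sum_sub_distrib]
    refine sum_congr rfl fun i _ => ?_
    simp only [one_pow, mul_one, neg_pow x, pow_add, pow_one]
    linear_combination (m.choose i : R) * x ^ m * x ^ i * (-1) ^ i * hsq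
  have hlast : 1 + (-1 : R) ^ (m + 1 + m) = 0 := by
    rw [show m + 1 + m = 2 * m + 1 by ring, pow_succ, pow_mul]; simp
  rw [hexpand, sum_range_succ, hlast, zero_mul, zero_mul, add_zero, ← Ico_add_one_right_eq_Icc,
    sum_Ico_eq_sum_range, show 2 * m + 1 - (m + 1) = m by omega]
  congr 1
  refine sum_congr rfl fun i _ => ?_
  rw [show m + 1 + i - m - 1 = i by omega, show m + 1 + i - 1 = m + i by omega]

theorem integral_pow_mul_one_sub_pow (a b : ℕ) :
    ∫ x in (0 : ℝ)..1, x ^ a * (1 - x) ^ b =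
      a.factorial * b.factorial / (a + b + 1).factorial := by
  have hβ := Complex.betaIntegral_eval_nat_add_one_right (u := a + 1) (by simp; positivity) b
  have hprod : ∏ j ∈ range (b + 1), ((a + 1 : ℂ) + j) = ((a + 1).ascFactorial (b + 1) : ℕ) := by
    rw [Nat.ascFactorial_eq_prod_range]; push_cast; rfl
  have hreal : Complex.betaIntegral (a + 1) (b + 1) =
      ((∫ x in (0 : ℝ)..1, x ^ a * (1 - x) ^ b : ℝ) : ℂ) := by
    rw [Complex.betaIntegral, ← intervalIntegral.integral_ofReal]
    refine intervalIntegral.integral_congr fun x _ => ?_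
    simp only [add_sub_cancel_right]
    norm_cast
  rw [hreal, hprod] at hβ
  rw [add_assoc, ← Nat.factorial_mul_ascFactorial a (b + 1), Nat.cast_mul,
    mul_div_mul_left _ _ (by positivity)]
  exact Complex.ofReal_injective (by simpa using hβ)

theorem integral_pow_mul_one_sub_pow_self (m : ℕ) :
    ∫ x in (0 : ℝ)..1, x ^ m * (1 - x) ^ m =
      1 / (((2 * m + 1 : ℕ) : ℝ) * ((2 * m).choose m : ℝ)) := by
  have hfact := Nat.add_choose_mul_factorial_mul_factorial m m
  rw [integral_pow_mul_one_sub_pow, Nat.factorial_succ, two_mul, ← hfact]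
  push_cast
  field_simp

noncomputable def bernoulliExpansion (m : ℕ) : ℝ[X] :=
  C ((-1) ^ m) * ∑ j ∈ Icc (m + 1) (2 * m),
    C ((1 + (-1 : ℝ) ^ j) / j * m.choose (j - m - 1)) *
      (Polynomial.bernoulli j).map (algebraMap ℚ ℝ)

theorem eval_bernoulliExpansion (m : ℕ) (x : ℝ) :
    (bernoulliExpansion m).eval x = (-1) ^ m * ∑ j ∈ Icc (m + 1) (2 * m),
      (1 + (-1) ^ j) / j * m.choose (j - m - 1) * aeval x (Polynomial.bernoulli j) := by
  simp [bernoulliExpansion, eval_finsetSum]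

theorem bernoulliExpansion_eval_add_one_sub (m : ℕ) (x : ℝ) :
    (bernoulliExpansion m).eval (x + 1) - (bernoulliExpansion m).eval x =
      (-1) ^ m * ∑ j ∈ Icc (m + 1) (2 * m),
        (1 + (-1) ^ j) * (m.choose (j - m - 1) : ℝ) * x ^ (j - 1) := by
  rw [eval_bernoulliExpansion, eval_bernoulliExpansion, ← mul_sub, ← sum_sub_distrib]
  congr 1
  refine sum_congr rfl fun j hj => ?_
  have hj : (j : ℝ) ≠ 0 := Nat.cast_ne_zero.2 (by grind)
  rw [aeval_bernoulli_add_one]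
  field_simp
  ring

theorem integral_eval_bernoulliExpansion (m : ℕ) :
    ∫ x in (0 : ℝ)..1, (bernoulliExpansion m).eval x = 0 := by
  simp_rw [eval_bernoulliExpansion]
  rw [intervalIntegral.integral_const_mul, intervalIntegral.integral_finsetSum]
  · refine mul_eq_zero_of_right _ (sum_eq_zero fun j hj => ?_)
    rw [intervalIntegral.integral_const_mul, integral_aeval_bernoulli (by grind), mul_zero]
  · exact fun j _ => Continuous.intervalIntegrable (by fun_prop) 0 1

theorem pow_mul_one_sub_pow_eq_bernoulli_expansion_general (m : ℕ) (x : ℝ) :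
    x ^ m * (1 - x) ^ m =
      1 / (((2 * m + 1 : ℕ) : ℝ) * ((2 * m).choose m : ℝ)) +
        (-1 : ℝ) ^ m *
          ∑ j ∈ Finset.Icc (m + 1) (2 * m),
            ((1 + (-1 : ℝ) ^ j) / (j : ℝ)) * (m.choose (j - m - 1) : ℝ) *
              Polynomial.aeval x (Polynomial.bernoulli j) := by
  set p : ℝ[X] := X ^ m * (1 - X) ^ m - bernoulliExpansion m with hp
  have hperiodic (y : ℝ) : p.eval (y + 1) = p.eval y := by
    have hpow := pow_mul_one_sub_pow_add_one_sub m y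
    have hbern := bernoulliExpansion_eval_add_one_sub m y
    simp only [hp, eval_sub, eval_mul, eval_pow, eval_X, eval_one]
    linear_combination hpow - hbern
  have hintegral : ∫ t in (0 : ℝ)..1, p.eval t =
      1 / (((2 * m + 1 : ℕ) : ℝ) * ((2 * m).choose m : ℝ)) := by
    simp only [hp, eval_sub, eval_mul, eval_pow, eval_X, eval_one]
    rw [intervalIntegral.integral_sub, integral_pow_mul_one_sub_pow_self,
      integral_eval_bernoulliExpansion, sub_zero]
    all_goals exact Continuous.intervalIntegrable (by fun_prop) 0 1
  have hx := eval_eq_integral_of_eval_add_one hperiodic x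
  rw [← eval_bernoulliExpansion, ← hintegral, ← hx]
  simp [hp]

theorem pow_mul_one_sub_pow_eq_bernoulli_expansion (m : ℕ) (hm : 1 ≤ m) (x : ℝ) :
    x ^ m * (1 - x) ^ m =
      1 / (((2 * m + 1 : ℕ) : ℝ) * ((2 * m).choose m : ℝ)) +
        (-1 : ℝ) ^ m *
          ∑ j ∈ Finset.Icc (m + 1) (2 * m),
            ((1 + (-1 : ℝ) ^ j) / (j : ℝ)) * (m.choose (j - m - 1) : ℝ) *
              Polynomial.aeval x (Polynomial.bernoulli j) :=
  pow_mul_one_sub_pow_eq_bernoulli_expansion_general m x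
end

section
/- For integers m ≥ 1 and k ≥ 2m, Σ_{j=m}^{2m} C(m, j−m) / C(k, j) = m! · (k−2m)! · (k+1) / (k+1−m)!. -/
/-!
Write `k = a + n + d`. By Pascal's rule, `S n a := ∑ᵢ C(n, i) / C(k, a + i)` satisfies
`S (n + 1) a = S n a + S n (a + 1)`, and so does `(k + 1) a! d! / (a + d + 1)!`; both equal
`1 / C(k, a)` at `n = 0`. The theorem is the case `n = a = m`, `d = k - 2m`.
-/

open Finset Nat

theorem Finset.sum_range_succ_choose_nsmul {M : Type*} [AddCommMonoid M] (f : ℕ → M) (n : ℕ) :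
    ∑ i ∈ range (n + 2), (n + 1).choose i • f i =
      ∑ i ∈ range (n + 1), n.choose i • (f i + f (i + 1)) := by
  have hshift := (sum_range_succ' (fun i => n.choose i • f i) (n + 1)).symm
  rw [sum_range_succ _ (n + 1), choose_succ_self, zero_nsmul, add_zero, choose_zero_right,
    one_nsmul] at hshift
  rw [sum_range_succ', choose_zero_right, one_nsmul]
  simp only [choose_succ_succ, add_nsmul, smul_add, sum_add_distrib]
  rw [add_assoc, hshift, add_comm]

variable {K : Type*} [Field K] [CharZero K]

theorem Nat.inv_cast_add_choose (a d : ℕ) :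
    ((a + d).choose a : K)⁻¹ = (a + d + 1) * a ! * d ! / (a + d + 1)! := by
  rw [cast_add_choose, inv_div, factorial_succ]
  push_cast
  rw [mul_assoc, mul_div_mul_left _ _ (by exact_mod_cast succ_ne_zero (a + d))]

theorem sum_range_choose_div_choose_add (n a d : ℕ) :
    ∑ i ∈ range (n + 1), (n.choose i : K) / (a + n + d).choose (a + i) =
      (a + n + d + 1) * a ! * d ! / (a + d + 1)! := by
  induction n generalizing a d with
  | zero => simpa [div_eq_mul_inv] using inv_cast_add_choose a d
  | succ n ih =>
    have h1 := ih a (d + 1)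
    have h2 := ih (a + 1) d
    rw [show a + n + (d + 1) = a + (n + 1) + d by omega] at h1
    rw [show a + 1 + n + d = a + (n + 1) + d by omega] at h2
    simp only [add_right_comm a 1] at h2
    generalize a + (n + 1) + d = k at h1 h2 ⊢
    have hpascal := Finset.sum_range_succ_choose_nsmul (fun i => (k.choose (a + i) : K)⁻¹) n
    simp only [nsmul_eq_mul, mul_add, sum_add_distrib, ← div_eq_mul_inv, ← add_assoc] at hpascal
    rw [hpascal, h1, h2, show a + (d + 1) + 1 = a + d + 1 + 1 by ring, factorial_succ (a + d + 1),
      factorial_succ d, factorial_succ a]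
    have hne : (a + d + 1 + 1 : K) ≠ 0 := by exact_mod_cast succ_ne_zero (a + d + 1)
    push_cast
    field_simp
    ring

theorem sum_choose_ratio_identity_general (m k : ℕ) (hk : 2 * m ≤ k) :
    ∑ j ∈ Finset.Icc m (2 * m), (m.choose (j - m) : ℚ) / (k.choose j : ℚ) =
      (Nat.factorial m : ℚ) * (Nat.factorial (k - 2 * m) : ℚ) * ((k : ℚ) + 1) /
        (Nat.factorial (k + 1 - m) : ℚ) := by
  obtain ⟨d, rfl⟩ : ∃ d, k = m + m + d := ⟨k - 2 * m, by omega⟩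
  rw [← Ico_add_one_right_eq_Icc, sum_Ico_eq_sum_range, show 2 * m + 1 - m = m + 1 by omega]
  simp only [add_tsub_cancel_left]
  rw [sum_range_choose_div_choose_add, show m + m + d - 2 * m = d by omega,
    show m + m + d + 1 - m = m + d + 1 by omega]
  push_cast
  ring

theorem sum_choose_ratio_identity (m k : ℕ) (hm : 1 ≤ m) (hk : 2 * m ≤ k) :
    ∑ j ∈ Finset.Icc m (2 * m), (m.choose (j - m) : ℚ) / (k.choose j : ℚ) =
      (Nat.factorial m : ℚ) * (Nat.factorial (k - 2 * m) : ℚ) * ((k : ℚ) + 1) /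
        (Nat.factorial (k + 1 - m) : ℚ) :=
  sum_choose_ratio_identity_general m k hk
end
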